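/- arXiv:2503.02132 — 2 statements merged into one kernel-verified Lean document; each statement's English description precedes it below -/
import Mathlib

section
/- Gaussian mechanism (one-dimensional): let f : D → ℝ have L2-sensitivity θ, meaning |f(X) − f(X')| ≤ θ for all neighboring X, X'. For ε ∈ (0,1) and δ ∈ (0,1), the mechanism M(X) = f(X) + Z, where Z ∼ N(0, σ²) with σ = θ·√(2 ln(1.25/δ))/ε, is (ε, δ)-differentially private. -/
/-!
Write `a = f X`, `b = f X'` and `v = σ²`. The privacy loss `log (p_a x / p_b x)` between the
densities of `N(a, v)` and `N(b, v)` is affine in `x`. Off the set where it exceeds `ε` we have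
`p_a ≤ e^ε p_b`, so `M(X)(O) ≤ e^ε M(X')(O) + N(a, v)(loss > ε)`. That set is a half-line, and its
`N(a, v)`-measure is the centred Gaussian tail beyond `vε/|a - b| - |a - b|/2 ≥ vε/θ - θ/2`. For
the calibrated variance this tail is at most `1.25 e^{-vε²/(2θ²)} = δ`: when the threshold `t` is
nonnegative by `P[Z > t] ≤ e^{-t²/(2v)}/2`, and when it is negative (possible only for `δ` close
to `1`) by bounding the density on `[t, 0]` by its maximum.
-/

open MeasureTheory ProbabilityTheory Real Set
open scoped NNReal ENNReal

theorem MeasureTheory.withDensity_le_mul_withDensity_add {α : Type*} [MeasurableSpace α]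
    (ρ : Measure α) [SFinite ρ] {p q : α → ℝ≥0∞} (hq : Measurable q) (c : ℝ≥0∞) (s : Set α) :
    ρ.withDensity p s ≤ c * ρ.withDensity q s + ρ.withDensity p {x | c * q x < p x} := by
  set B := {x | c * q x < p x}
  calc ρ.withDensity p s
      ≤ ρ.withDensity p (s \ B) + ρ.withDensity p B :=
        (measure_mono (subset_sdiff_union s B)).trans (measure_union_le _ _)
    _ ≤ c * ρ.withDensity q s + ρ.withDensity p B := by
      gcongr
      calc ρ.withDensity p (s \ B)
          = ∫⁻ x in s \ B, p x ∂ρ := withDensity_apply' _ _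
        _ ≤ ∫⁻ x in s \ B, c * q x ∂ρ := setLIntegral_mono (hq.const_mul c) fun x hx ↦ not_lt.1 hx.2
        _ ≤ ∫⁻ x in s, c * q x ∂ρ := lintegral_mono_set sdiff_subset
        _ = c * ρ.withDensity q s := by rw [lintegral_const_mul c hq, withDensity_apply' _ _]

namespace ProbabilityTheory

/-- `log (p_a x / p_b x)` for the densities `p_a`, `p_b` of `N(a, v)` and `N(b, v)`. -/
noncomputable def gaussianPrivacyLoss (a b : ℝ) (v : ℝ≥0) (x : ℝ) : ℝ :=
  (a - b) * (2 * x - a - b) / (2 * v)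

theorem gaussianPDFReal_eq_exp_mul (a b : ℝ) (v : ℝ≥0) (x : ℝ) :
    gaussianPDFReal a v x = exp (gaussianPrivacyLoss a b v x) * gaussianPDFReal b v x := by
  simp only [gaussianPDFReal, gaussianPrivacyLoss]
  rw [mul_left_comm, ← exp_add, ← add_div]
  ring_nf

theorem gaussianPDFReal_le_inv_sqrt (μ : ℝ) (v : ℝ≥0) (x : ℝ) :
    gaussianPDFReal μ v x ≤ (√(2 * π * v))⁻¹ := by
  rw [gaussianPDFReal]
  refine mul_le_of_le_one_right (by positivity) (exp_le_one_iff.2 ?_)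
  exact div_nonpos_of_nonpos_of_nonneg (neg_nonpos.2 (sq_nonneg _)) (by positivity)

variable {v : ℝ≥0}

theorem gaussianReal_Iio_sub (μ s : ℝ) :
    gaussianReal μ v (Iio (μ - s)) = gaussianReal μ v (Ioi (μ + s)) := by
  have hrefl : (gaussianReal μ v).map (2 * μ - ·) = gaussianReal μ v := by
    rw [gaussianReal_map_const_sub]; ring_nf
  conv_lhs => rw [← hrefl]
  rw [Measure.map_apply (by fun_prop) measurableSet_Iio]
  congr 1
  ext x
  simp only [mem_preimage, mem_Iio, mem_Ioi]
  constructor <;> intro h <;> linarith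

theorem gaussianReal_Ioi_add (μ s : ℝ) :
    gaussianReal μ v (Ioi (μ + s)) = gaussianReal 0 v (Ioi s) := by
  rw [← zero_add μ, ← gaussianReal_map_const_add, Measure.map_apply (by fun_prop) measurableSet_Ioi]
  congr 1
  ext x
  simp

theorem gaussianReal_Ioi_self (μ : ℝ) (hv : v ≠ 0) : gaussianReal μ v (Ioi μ) = 2⁻¹ := by
  have hsymm : gaussianReal μ v (Iic μ) = gaussianReal μ v (Ioi μ) := by
    rw [← measure_congr (Iio_ae_eq_Iic' (gaussianReal_absolutelyContinuous μ hv volume_singleton))]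
    simpa using gaussianReal_Iio_sub (v := v) μ 0
  have hsum := measure_add_measure_compl (μ := gaussianReal μ v) (measurableSet_Iic (a := μ))
  rw [compl_Iic, measure_univ, hsymm, ← two_mul] at hsum
  exact ENNReal.eq_inv_of_mul_eq_one_left (by rwa [mul_comm])

theorem gaussianReal_Ioi_le_of_nonneg (hv : v ≠ 0) {t : ℝ} (ht : 0 ≤ t) :
    gaussianReal 0 v (Ioi t) ≤ ENNReal.ofReal (exp (-t ^ 2 / (2 * v)) / 2) := by
  have hpdf : ∀ x ∈ Ioi t,
      gaussianPDF 0 v x ≤ ENNReal.ofReal (exp (-t ^ 2 / (2 * v))) * gaussianPDF t v x := by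
    intro x (hx : t < x)
    rw [gaussianPDF, gaussianPDF, ← ENNReal.ofReal_mul (exp_nonneg _),
      gaussianPDFReal_eq_exp_mul 0 t, gaussianPrivacyLoss]
    refine ENNReal.ofReal_le_ofReal <|
      mul_le_mul_of_nonneg_right (exp_le_exp.2 ?_) (gaussianPDFReal_nonneg _ _ _)
    gcongr
    nlinarith
  calc gaussianReal 0 v (Ioi t)
      = ∫⁻ x in Ioi t, gaussianPDF 0 v x := gaussianReal_apply 0 hv _
    _ ≤ ∫⁻ x in Ioi t, ENNReal.ofReal (exp (-t ^ 2 / (2 * v))) * gaussianPDF t v x :=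
      setLIntegral_mono ((measurable_gaussianPDF t v).const_mul _) hpdf
    _ = ENNReal.ofReal (exp (-t ^ 2 / (2 * v))) * gaussianReal t v (Ioi t) := by
      rw [lintegral_const_mul _ (measurable_gaussianPDF t v), gaussianReal_apply t hv]
    _ = ENNReal.ofReal (exp (-t ^ 2 / (2 * v)) / 2) := by
      rw [gaussianReal_Ioi_self t hv, ENNReal.ofReal_div_of_pos two_pos, ENNReal.ofReal_ofNat]
      rfl

theorem gaussianReal_Ioi_le_of_nonpos (hv : v ≠ 0) {t : ℝ} (ht : t ≤ 0) :
    gaussianReal 0 v (Ioi t) ≤ ENNReal.ofReal (1 / 2 + -t / √(2 * π * v)) := by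
  have hIoc : gaussianReal 0 v (Ioc t 0) ≤ ENNReal.ofReal (-t / √(2 * π * v)) := by
    calc gaussianReal 0 v (Ioc t 0)
        = ∫⁻ x in Ioc t 0, gaussianPDF 0 v x := gaussianReal_apply 0 hv _
      _ ≤ ∫⁻ _ in Ioc t 0, ENNReal.ofReal (√(2 * π * v))⁻¹ :=
        setLIntegral_mono measurable_const fun x _ ↦
          ENNReal.ofReal_le_ofReal (gaussianPDFReal_le_inv_sqrt 0 v x)
      _ = ENNReal.ofReal (-t / √(2 * π * v)) := by
        rw [setLIntegral_const, Real.volume_Ioc, ← ENNReal.ofReal_mul (by positivity), zero_sub,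
          mul_comm, div_eq_mul_inv]
  calc gaussianReal 0 v (Ioi t)
      ≤ gaussianReal 0 v (Ioc t 0) + gaussianReal 0 v (Ioi 0) := by
        rw [← Ioc_union_Ioi_eq_Ioi ht]; exact measure_union_le _ _
    _ ≤ ENNReal.ofReal (-t / √(2 * π * v)) + ENNReal.ofReal (1 / 2) := by
        rw [gaussianReal_Ioi_self 0 hv, ENNReal.ofReal_div_of_pos two_pos, ENNReal.ofReal_one,
          ENNReal.ofReal_ofNat, one_div]
        gcongr
    _ = ENNReal.ofReal (1 / 2 + -t / √(2 * π * v)) := by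
        rw [add_comm,
          ENNReal.ofReal_add (by norm_num) (div_nonneg (neg_nonneg.2 ht) (sqrt_nonneg _))]

theorem gaussianReal_Ioi_mul_div_sub_half_le (hv : v ≠ 0) {θ ε : ℝ} (hθ : 0 < θ) (hε : 0 ≤ ε)
    (hε1 : ε ≤ 1) :
    gaussianReal 0 v (Ioi (v * ε / θ - θ / 2)) ≤
      ENNReal.ofReal (1.25 * exp (-(v * ε ^ 2 / (2 * θ ^ 2)))) := by
  have hv₀ : (0 : ℝ) < v := by positivity
  set L := (v : ℝ) * ε ^ 2 / (2 * θ ^ 2) with hL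
  set t := (v : ℝ) * ε / θ - θ / 2 with ht
  rcases le_or_gt 0 t with ht₀ | ht₀
  · refine (gaussianReal_Ioi_le_of_nonneg hv ht₀).trans (ENNReal.ofReal_le_ofReal ?_)
    have hexponent : -t ^ 2 / (2 * v) ≤ 1 / 2 + -L := by
      have hθv : 0 ≤ θ ^ 2 / (8 * v) := by positivity
      have hsq : -t ^ 2 / (2 * v) = ε / 2 - L - θ ^ 2 / (8 * v) := by
        rw [ht, hL]; field_simp; ring
      linarith
    have hexp_half : exp (1 / 2) < 2 := by
      convert exp_bound_div_one_sub_of_interval' (x := 1 / 2) (by norm_num) (by norm_num) using 1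
      norm_num
    calc exp (-t ^ 2 / (2 * v)) / 2
        ≤ exp (1 / 2 + -L) / 2 := by gcongr
      _ = exp (1 / 2) / 2 * exp (-L) := by rw [exp_add]; ring
      _ ≤ 1.25 * exp (-L) := by gcongr; linarith
  · by_cases hge_one : 1 ≤ 1.25 * exp (-L)
    · exact prob_le_one.trans (ENNReal.one_le_ofReal.2 hge_one)
    refine (gaussianReal_Ioi_le_of_nonpos hv ht₀.le).trans (ENNReal.ofReal_le_ofReal ?_)
    have hexp_L : -L + 1 ≤ exp (-L) := add_one_le_exp (-L)
    have hL_lt : L < 1 / 4 := by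
      have h : (v : ℝ) * ε < θ / 2 * θ := (div_lt_iff₀ hθ).1 (by linarith)
      rw [hL, div_lt_iff₀ (by positivity)]
      nlinarith [mul_nonneg hv₀.le hε]
    have hL_gt : 1 / 5 < L := by linarith
    have hθ_sq : θ ^ 2 < 5 / 2 * v := by
      rw [hL, lt_div_iff₀ (by positivity)] at hL_gt
      nlinarith [mul_le_mul_of_nonneg_left (pow_le_one₀ hε hε1 : ε ^ 2 ≤ 1) hv₀.le]
    have hθ_sqrt : 4 / 3 * θ ≤ √(2 * π * v) := by
      refine le_sqrt_of_sq_le ?_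
      nlinarith [pi_gt_three]
    have hsqrt : 0 < √(2 * π * v) := by positivity
    have ht_neg : -t ≤ θ / 2 := by
      have : 0 ≤ (v : ℝ) * ε / θ := by positivity
      linarith
    have hdensity : -t / √(2 * π * v) ≤ 3 / 8 := by
      rw [div_le_iff₀ hsqrt]; linarith
    linarith

theorem gaussianReal_le_exp_mul_add (hv : v ≠ 0) (a b ε : ℝ) (s : Set ℝ) :
    gaussianReal a v s ≤ ENNReal.ofReal (exp ε) * gaussianReal b v s +
      gaussianReal a v {x | ε < gaussianPrivacyLoss a b v x} := by
  rw [gaussianReal_of_var_ne_zero a hv, gaussianReal_of_var_ne_zero b hv]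
  convert withDensity_le_mul_withDensity_add volume (measurable_gaussianPDF b v)
    (ENNReal.ofReal (exp ε)) s using 4
  ext x
  rw [gaussianPDF, gaussianPDF, ← ENNReal.ofReal_mul (exp_nonneg _),
    ENNReal.ofReal_lt_ofReal_iff (gaussianPDFReal_pos _ _ _ hv), gaussianPDFReal_eq_exp_mul a b,
    mul_lt_mul_iff_left₀ (gaussianPDFReal_pos _ _ _ hv), exp_lt_exp]

theorem gaussianReal_gaussianPrivacyLoss_gt_le (hv : v ≠ 0) {a b ε θ : ℝ} (hε : 0 ≤ ε)
    (hab : |a - b| ≤ θ) :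
    gaussianReal a v {x | ε < gaussianPrivacyLoss a b v x} ≤
      gaussianReal 0 v (Ioi (v * ε / θ - θ / 2)) := by
  rcases eq_or_ne a b with rfl | hne
  · simp [gaussianPrivacyLoss, hε.not_gt]
  have hv₀ : (0 : ℝ) < 2 * v := by positivity
  have hd : 0 < |a - b| := abs_pos.2 (sub_ne_zero.2 hne)
  have hmono : (v : ℝ) * ε / θ - θ / 2 ≤ v * ε / |a - b| - |a - b| / 2 := by
    have : (v : ℝ) * ε / θ ≤ v * ε / |a - b| := by gcongr
    linarith
  refine le_trans (le_of_eq ?_) (measure_mono (Ioi_subset_Ioi hmono))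
  rcases hne.lt_or_gt with h | h
  · rw [abs_of_neg (sub_neg.2 h), ← gaussianReal_Ioi_add a, ← gaussianReal_Iio_sub]
    congr 1
    ext x
    have hgap : a - (v * ε / -(a - b) - -(a - b) / 2) - x =
        ((a - b) * (2 * x - a - b) - ε * (2 * v)) / (2 * (b - a)) := by
      field_simp; ring
    rw [mem_ofPred_eq, mem_Iio, gaussianPrivacyLoss, lt_div_iff₀ hv₀, ← sub_pos, ← sub_pos (b := x),
      hgap, div_pos_iff_of_pos_right (by linarith)]
  · rw [abs_of_pos (sub_pos.2 h), ← gaussianReal_Ioi_add a]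
    congr 1
    ext x
    have hgap : x - (a + (v * ε / (a - b) - (a - b) / 2)) =
        ((a - b) * (2 * x - a - b) - ε * (2 * v)) / (2 * (a - b)) := by
      field_simp; ring
    rw [mem_ofPred_eq, mem_Ioi, gaussianPrivacyLoss, lt_div_iff₀ hv₀, ← sub_pos,
      ← sub_pos (b := a + _), hgap, div_pos_iff_of_pos_right (by linarith)]

end ProbabilityTheory

/-- Gaussian mechanism (one-dimensional): if `f` has L2-sensitivity `θ` for the
neighboring relation, `ε, δ ∈ (0,1)` and `σ = θ·√(2 ln(1.25/δ))/ε`, then the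
mechanism `M(X) = f(X) + Z` with `Z ∼ N(0, σ²)`, i.e. `M(X) ∼ N(f(X), σ²)`,
is `(ε, δ)`-differentially private. -/
theorem gaussian_mechanism_dp {D : Type*} (Neighbor : D → D → Prop) (f : D → ℝ)
    (θ ε δ σ : ℝ)
    (hsens : ∀ X X', Neighbor X X' → |f X - f X'| ≤ θ)
    (hε : 0 < ε) (hε1 : ε < 1) (hδ : 0 < δ) (hδ1 : δ < 1)
    (hσ : σ = θ * Real.sqrt (2 * Real.log (1.25 / δ)) / ε) :
    ∀ X X', Neighbor X X' → ∀ O : Set ℝ, MeasurableSet O →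
      (gaussianReal 0 (σ ^ 2).toNNReal).map (fun z => f X + z) O ≤
        ENNReal.ofReal (Real.exp ε) *
          (gaussianReal 0 (σ ^ 2).toNNReal).map (fun z => f X' + z) O
          + ENNReal.ofReal δ := by
  intro X X' hN O _
  rw [gaussianReal_map_const_add, gaussianReal_map_const_add, zero_add, zero_add]
  rcases eq_or_ne (f X) (f X') with hf | hf
  · rw [hf]
    exact le_add_right (le_mul_of_one_le_left' (ENNReal.one_le_ofReal.2 (one_le_exp hε.le)))
  set v := (σ ^ 2).toNNReal
  set L := log (1.25 / δ)
  have hθ : 0 < θ := (abs_pos.2 (sub_ne_zero.2 hf)).trans_le (hsens X X' hN)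
  have hL : 0 < L := log_pos (by rw [lt_div_iff₀ hδ]; linarith)
  have hv : (v : ℝ) = 2 * L * θ ^ 2 / ε ^ 2 := by
    rw [Real.coe_toNNReal _ (sq_nonneg σ), hσ, div_pow, mul_pow, sq_sqrt (by positivity)]
    ring
  have hv₀ : v ≠ 0 := by
    rw [← NNReal.coe_ne_zero, hv]; positivity
  have hloss : 1.25 * exp (-(v * ε ^ 2 / (2 * θ ^ 2))) = δ := by
    rw [hv, show 2 * L * θ ^ 2 / ε ^ 2 * ε ^ 2 / (2 * θ ^ 2) = L by field_simp, exp_neg,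
      exp_log (by positivity)]
    field_simp
  calc gaussianReal (f X) v O
      ≤ ENNReal.ofReal (exp ε) * gaussianReal (f X') v O +
          gaussianReal (f X) v {x | ε < gaussianPrivacyLoss (f X) (f X') v x} :=
        gaussianReal_le_exp_mul_add hv₀ (f X) (f X') ε O
    _ ≤ ENNReal.ofReal (exp ε) * gaussianReal (f X') v O +
          gaussianReal 0 v (Ioi (v * ε / θ - θ / 2)) :=
        add_le_add le_rfl (gaussianReal_gaussianPrivacyLoss_gt_le hv₀ hε.le (hsens X X' hN))
    _ ≤ ENNReal.ofReal (exp ε) * gaussianReal (f X') v O + ENNReal.ofReal δ :=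
        add_le_add le_rfl (hloss ▸ gaussianReal_Ioi_mul_div_sub_half_le hv₀ hθ hε.le hε1.le)
end

section
/- Gaussian privacy loss bound: let μ ∈ ℝ with |μ| ≤ θ and σ > 0. For Z ∼ N(0, σ²), consider the privacy loss L(z) = ln( φ_σ(z) / φ_σ(z − μ) ) = (2zμ − μ²)/(2σ²). If σ ≥ θ·√(2 ln(1.25/δ))/ε with 0 < ε ≤ 1 and 0 < δ < 1, then Pr_{Z ∼ N(0,σ²)}[ (2Zμ + μ²)/(2σ²) > ε ] ≤ δ. -/
open MeasureTheory ProbabilityTheory Real Filter Set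

-- numeric lemmas
lemma exp_half_le : Real.exp (1/2) ≤ 15/8 := by
  have h : Real.exp (1/2) ^ (2:ℕ) = Real.exp 1 := by
    rw [← Real.exp_nat_mul]; norm_num
  nlinarith [Real.exp_one_lt_d9, Real.exp_pos (1/2 : ℝ), sq_nonneg (Real.exp (1/2) - 15/8)]

lemma exp_quarter_le : Real.exp (1/4) ≤ 13/10 := by
  have h : Real.exp (1/4) ^ (4:ℕ) = Real.exp 1 := by
    rw [← Real.exp_nat_mul]; norm_num
  nlinarith [Real.exp_one_lt_d9, Real.exp_pos (1/4 : ℝ),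
    sq_nonneg (Real.exp (1/4) ^ 2 - 169/100), sq_nonneg (Real.exp (1/4) - 13/10),
    sq_nonneg (Real.exp (1/4))]

lemma log_twohalf : (17/20 : ℝ) ≤ Real.log (5/2) := by
  rw [Real.le_log_iff_exp_le (by norm_num)]
  have h20 : Real.exp (17/20) ^ (20:ℕ) = Real.exp 17 := by
    rw [← Real.exp_nat_mul]; norm_num
  have he : Real.exp 17 = Real.exp 1 ^ (17:ℕ) := by
    rw [← Real.exp_nat_mul]; norm_num
  have hlt : Real.exp 1 ^ (17:ℕ) ≤ 2.7182818286 ^ (17:ℕ) :=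
    pow_le_pow_left₀ (Real.exp_pos 1).le Real.exp_one_lt_d9.le 17
  have hpow : Real.exp (17/20) ^ (20:ℕ) ≤ (5/2 : ℝ) ^ (20:ℕ) := by
    rw [h20, he]
    refine le_trans hlt ?_
    norm_num
  exact le_of_pow_le_pow_left₀ (by norm_num) (by norm_num) hpow

lemma sqrt_two_pi_ge : (5/2 : ℝ) ≤ Real.sqrt (2*Real.pi) := by
  rw [Real.le_sqrt (by norm_num)]
  · nlinarith [Real.pi_gt_d6]
  positivity

-- integral lemmas
lemma integral_tail (σ a : ℝ) (hσ : 0 < σ) (ha : 0 ≤ a) :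
    ∫ x in Set.Ioi a, x * Real.exp (-x^2/(2*σ^2)) = σ^2 * Real.exp (-a^2/(2*σ^2)) := by
  have h2σ : (0:ℝ) < 2*σ^2 := by positivity
  have hderiv : ∀ x ∈ Set.Ici a, HasDerivAt (fun x => -σ^2 * Real.exp (-x^2/(2*σ^2)))
      (x * Real.exp (-x^2/(2*σ^2))) x := by
    intro x _
    have h1 : HasDerivAt (fun x : ℝ => -x^2/(2*σ^2)) (-(2*x)/(2*σ^2)) x := by
      have := ((hasDerivAt_pow 2 x).neg).div_const (2*σ^2)
      exact this.congr_deriv (by norm_num)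
    have h3 := (h1.exp).const_mul (-σ^2)
    exact h3.congr_deriv (by field_simp)
  have hpos : ∀ x ∈ Set.Ioi a, 0 ≤ x * Real.exp (-x^2/(2*σ^2)) :=
    fun x hx => mul_nonneg (le_trans ha (le_of_lt hx)) (Real.exp_nonneg _)
  have htends : Tendsto (fun x : ℝ => -σ^2 * Real.exp (-x^2/(2*σ^2))) atTop (nhds 0) := by
    have h1 : Tendsto (fun x : ℝ => -x^2/(2*σ^2)) atTop atBot := by
      apply Filter.Tendsto.atBot_div_const h2σ
      exact tendsto_neg_atBot_iff.mpr (tendsto_pow_atTop two_ne_zero)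
    have h2 := (Real.tendsto_exp_atBot.comp h1).const_mul (-σ^2)
    simpa using h2
  rw [integral_Ioi_of_hasDerivAt_of_nonneg' hderiv hpos htends]
  ring

lemma integrable_tail (σ a : ℝ) (hσ : 0 < σ) (ha : 0 ≤ a) :
    IntegrableOn (fun x => x * Real.exp (-x^2/(2*σ^2))) (Set.Ioi a) := by
  have h2σ : (0:ℝ) < 2*σ^2 := by positivity
  have hderiv : ∀ x ∈ Set.Ici a, HasDerivAt (fun x => -σ^2 * Real.exp (-x^2/(2*σ^2)))
      (x * Real.exp (-x^2/(2*σ^2))) x := by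
    intro x _
    have h1 : HasDerivAt (fun x : ℝ => -x^2/(2*σ^2)) (-(2*x)/(2*σ^2)) x := by
      have := ((hasDerivAt_pow 2 x).neg).div_const (2*σ^2)
      exact this.congr_deriv (by norm_num)
    have h3 := (h1.exp).const_mul (-σ^2)
    exact h3.congr_deriv (by field_simp)
  have hpos : ∀ x ∈ Set.Ioi a, 0 ≤ x * Real.exp (-x^2/(2*σ^2)) :=
    fun x hx => mul_nonneg (le_trans ha (le_of_lt hx)) (Real.exp_nonneg _)
  have htends : Tendsto (fun x : ℝ => -σ^2 * Real.exp (-x^2/(2*σ^2))) atTop (nhds 0) := by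
    have h1 : Tendsto (fun x : ℝ => -x^2/(2*σ^2)) atTop atBot := by
      apply Filter.Tendsto.atBot_div_const h2σ
      exact tendsto_neg_atBot_iff.mpr (tendsto_pow_atTop two_ne_zero)
    have h2 := (Real.tendsto_exp_atBot.comp h1).const_mul (-σ^2)
    simpa using h2
  exact integrableOn_Ioi_deriv_of_nonneg' hderiv hpos htends

-- pdf form
lemma gauss_pdf_eq (σ : ℝ) (hσ : 0 < σ) (x : ℝ) :
    gaussianPDFReal 0 (σ^2).toNNReal x = (σ * Real.sqrt (2*Real.pi))⁻¹ * Real.exp (-x^2/(2*σ^2)) := by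
  rw [gaussianPDFReal]
  have hv : ((σ^2).toNNReal : ℝ) = σ^2 := Real.coe_toNNReal _ (by positivity)
  rw [hv]
  rw [show 2*Real.pi*σ^2 = (2*Real.pi)*σ^2 by ring, Real.sqrt_mul (by positivity), Real.sqrt_sq hσ.le]
  rw [mul_comm (Real.sqrt (2*Real.pi)) σ]
  ring_nf

lemma gauss_var_ne (σ : ℝ) (hσ : 0 < σ) : (σ^2).toNNReal ≠ 0 := by
  simp only [ne_eq, Real.toNNReal_eq_zero, not_le]
  positivity

-- Mills-type tail bound
lemma mills (σ a : ℝ) (hσ : 0 < σ) (ha : 0 < a) :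
    gaussianReal 0 (σ^2).toNNReal (Set.Ioi a) ≤
      ENNReal.ofReal (σ / (a * Real.sqrt (2*Real.pi)) * Real.exp (-a^2/(2*σ^2))) := by
  have hv := gauss_var_ne σ hσ
  rw [gaussianReal_apply _ hv]
  have hstep : ∫⁻ x in Set.Ioi a, gaussianPDF 0 (σ^2).toNNReal x ≤
      ∫⁻ x in Set.Ioi a, ENNReal.ofReal ((x/a) * gaussianPDFReal 0 (σ^2).toNNReal x) := by
    apply setLIntegral_mono
    · exact (ENNReal.measurable_ofReal.comp ((measurable_id.div_const a).mul
        (measurable_gaussianPDFReal 0 _)))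
    · intro x hx
      rw [gaussianPDF]
      apply ENNReal.ofReal_le_ofReal
      have h1 : (1:ℝ) ≤ x/a := (le_div_iff₀ ha).mpr (by simpa using (le_of_lt hx))
      nlinarith [gaussianPDFReal_nonneg 0 (σ^2).toNNReal x]
  refine le_trans hstep ?_
  have heq : ∀ x : ℝ, (x/a) * gaussianPDFReal 0 (σ^2).toNNReal x
      = ((a * (σ * Real.sqrt (2*Real.pi)))⁻¹) * (x * Real.exp (-x^2/(2*σ^2))) := by
    intro x
    rw [gauss_pdf_eq σ hσ]
    field_simp
  simp_rw [heq]
  rw [← ofReal_integral_eq_lintegral_ofReal]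
  · apply ENNReal.ofReal_le_ofReal
    rw [MeasureTheory.integral_const_mul, integral_tail σ a hσ ha.le]
    apply le_of_eq
    have hs : Real.sqrt (2*Real.pi) > 0 := Real.sqrt_pos.mpr (by positivity)
    field_simp
  · exact (integrable_tail σ a hσ ha.le).const_mul _
  · filter_upwards [ae_restrict_mem measurableSet_Ioi] with x hx
    have hx0 : 0 ≤ x := le_of_lt (lt_trans ha hx)
    positivity

-- symmetry
lemma gauss_symm (v : NNReal) (b : ℝ) :
    gaussianReal 0 v (Set.Iio b) = gaussianReal 0 v (Set.Ioi (-b)) := by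
  have hmap := gaussianReal_map_const_mul (μ := 0) (v := v) (-1)
  have hv1 : (NNReal.mk ((-1:ℝ)^2) (sq_nonneg _) * v : NNReal) = v := by
    ext; simp
  rw [hv1, mul_zero] at hmap
  have h : gaussianReal 0 v (Set.Iio b) = ((gaussianReal 0 v).map ((-1 : ℝ) * ·)) (Set.Iio b) := by
    rw [hmap]
  rw [h, Measure.map_apply (by fun_prop) measurableSet_Iio]
  congr 1
  ext x
  simp [neg_lt]

lemma gauss_half (v : NNReal) (a : ℝ) (ha : 0 ≤ a) :
    gaussianReal 0 v (Set.Ioi a) ≤ 1/2 := by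
  have hm : gaussianReal 0 v (Set.Ioi a) ≤ gaussianReal 0 v (Set.Ioi 0) :=
    measure_mono (Set.Ioi_subset_Ioi ha)
  refine le_trans hm ?_
  have hsym : gaussianReal 0 v (Set.Iio 0) = gaussianReal 0 v (Set.Ioi 0) := by
    simpa using gauss_symm v 0
  have hsum : gaussianReal 0 v (Set.Iio 0) + gaussianReal 0 v (Set.Ioi 0) ≤ 1 := by
    rw [← measure_union ((Set.Iio_disjoint_Ici le_rfl).mono_right Set.Ioi_subset_Ici_self)
      measurableSet_Ioi]
    rw [← measure_univ (μ := gaussianReal 0 v)]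
    exact measure_mono (Set.subset_univ _)
  rw [hsym, ← two_mul] at hsum
  rw [ENNReal.le_div_iff_mul_le (by norm_num) (by norm_num), mul_comm]
  exact hsum

lemma gauss_strip (σ a : ℝ) (hσ : 0 < σ) (ha : a ≤ 0) :
    gaussianReal 0 (σ^2).toNNReal (Set.Ioc a 0) ≤
      ENNReal.ofReal ((-a) * (σ * Real.sqrt (2*Real.pi))⁻¹) := by
  have hv : (σ^2).toNNReal ≠ 0 := gauss_var_ne σ hσ
  rw [gaussianReal_apply _ hv]
  have hbd : ∫⁻ x in Set.Ioc a 0, gaussianPDF 0 (σ^2).toNNReal x ≤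
      ∫⁻ _x in Set.Ioc a 0, ENNReal.ofReal ((σ * Real.sqrt (2*Real.pi))⁻¹) := by
    apply setLIntegral_mono measurable_const
    intro x _
    rw [gaussianPDF]
    apply ENNReal.ofReal_le_ofReal
    rw [gauss_pdf_eq σ hσ]
    have h1 : Real.exp (-x^2/(2*σ^2)) ≤ 1 := by
      rw [Real.exp_le_one_iff]
      have h2 : (0:ℝ) < 2*σ^2 := by positivity
      apply div_nonpos_of_nonpos_of_nonneg <;> nlinarith [sq_nonneg x]
    nlinarith [Real.sqrt_nonneg (2*Real.pi), Real.exp_nonneg (-x^2/(2*σ^2)),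
      inv_nonneg.mpr (mul_nonneg hσ.le (Real.sqrt_nonneg (2*Real.pi)))]
  refine le_trans hbd ?_
  rw [setLIntegral_const, Real.volume_Ioc]
  rw [← ENNReal.ofReal_mul (by positivity), mul_comm]
  apply ENNReal.ofReal_le_ofReal
  simp

lemma half_ofReal : ENNReal.ofReal (1/2 : ℝ) = 1/2 := by
  rw [ENNReal.ofReal_div_of_pos (by norm_num), ENNReal.ofReal_one, ENNReal.ofReal_ofNat]

set_option maxHeartbeats 2000000 in
lemma tail_bound (θ ε δ σ : ℝ) (hθ : 0 < θ) (hε : 0 < ε) (hε1 : ε ≤ 1)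
    (hδ : 0 < δ) (hδ1 : δ < 1) (hσpos : 0 < σ)
    (hεσ : θ * Real.sqrt (2 * Real.log (1.25 / δ)) ≤ ε * σ) (b : ℝ)
    (hb : ε*σ^2/θ - θ/2 ≤ b) :
    gaussianReal 0 (σ^2).toNNReal (Set.Ioi b) ≤ ENNReal.ofReal δ := by
  rw [show (1.25 : ℝ) = 5/4 by norm_num] at hεσ
  have hδ125 : (0:ℝ) < 5/4 / δ := by positivity
  set L := Real.log (5/4 / δ) with hLdef
  clear_value L
  -- facts about L
  have hL0 : 0 < L := by rw [hLdef]; exact Real.log_pos (by rw [lt_div_iff₀ hδ]; linarith)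
  have hL15 : (1/5 : ℝ) ≤ L := by
    have h1 : Real.log (δ * (4/5)) ≤ δ * (4/5) - 1 := Real.log_le_sub_one_of_pos (by positivity)
    have h4 : (5/4:ℝ)/δ = (δ*(4/5))⁻¹ := by field_simp
    have h2 : L = -Real.log (δ*(4/5)) := by rw [hLdef, h4, Real.log_inv]
    rw [h2]
    linarith
  have hL85 : δ < 1/2 → (17/20 : ℝ) ≤ L := by
    intro h
    refine le_trans log_twohalf ?_
    rw [hLdef]
    apply Real.log_le_log (by norm_num)
    rw [le_div_iff₀ hδ]; linarith
  have hexpL : Real.exp L = 5/4 / δ := by rw [hLdef]; exact Real.exp_log hδ125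
  set c := Real.sqrt (2 * L) with hcdef
  clear_value c
  have hc2 : c^2 = 2*L := by rw [hcdef]; exact Real.sq_sqrt (by linarith)
  have hc0 : 0 < c := by rw [hcdef]; exact Real.sqrt_pos.mpr (by linarith)
  have hc58 : (5/8 : ℝ) ≤ c := by
    rw [hcdef, Real.le_sqrt' (by norm_num)]; linarith
  have hc13 : δ < 1/2 → (13/10 : ℝ) ≤ c := by
    intro h
    rw [hcdef, Real.le_sqrt' (by norm_num)]
    linarith [hL85 h]
  clear hLdef hcdef
  have hsq : (5/2 : ℝ) ≤ Real.sqrt (2*Real.pi) := sqrt_two_pi_ge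
  have hsq0 : (0:ℝ) < Real.sqrt (2*Real.pi) := by linarith
  -- lower bound for a
  set a := ε*σ^2/θ - θ/2 with hadef
  clear_value a
  have halb : σ * (c - ε/(2*c)) ≤ a := by
    have h1 : σ * c ≤ ε*σ^2/θ := by
      rw [le_div_iff₀ hθ]
      nlinarith
    have h2 : θ/2 ≤ σ * (ε/(2*c)) := by
      rw [show σ * (ε/(2*c)) = σ*ε/(2*c) by ring, le_div_iff₀ (by positivity)]
      nlinarith
    rw [hadef]; linarith
  have haup : a < 0 → c^2 ≤ ε/2 := by
    intro ha0
    have h1 : ε*σ^2/θ < θ/2 := by rw [hadef] at ha0; linarith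
    have h2 : ε*σ^2 < θ^2/2 := by
      rw [div_lt_iff₀ hθ] at h1; nlinarith
    nlinarith [mul_le_mul hεσ hεσ (by positivity) (by positivity),
      mul_pos hθ hθ, mul_lt_mul_of_pos_left h2 hε, sq_nonneg θ]
  clear hadef
  have hmono : gaussianReal 0 (σ^2).toNNReal (Set.Ioi b) ≤
      gaussianReal 0 (σ^2).toNNReal (Set.Ioi a) := measure_mono (Set.Ioi_subset_Ioi hb)
  refine le_trans hmono ?_
  by_cases hδhalf : δ < 1/2
  · -- Mills case
    have hc13' := hc13 hδhalf
    set y := c - ε/(2*c) with hydef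
    clear_value y
    have hy9 : (9/10 : ℝ) ≤ y := by
      have h1 : ε/(2*c) ≤ 1/(2*c) := by gcongr
      have h2 : 1/(2*c) ≤ 5/13 := by
        rw [div_le_div_iff₀ (by positivity) (by norm_num)]
        linarith
      rw [hydef]; linarith
    have hy2 : 2*L - 1 ≤ y^2 := by
      have hexpand : y^2 = c^2 - ε + (ε/(2*c))^2 := by
        rw [hydef]; field_simp; ring
      linarith [hexpand, hc2, sq_nonneg (ε/(2*c))]
    clear hydef
    have hy0 : 0 < y := by linarith
    have hsy : σ * y ≤ a := halb
    have ha0 : 0 < a := lt_of_lt_of_le (by positivity) halb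
    refine le_trans (mills σ a hσpos ha0) ?_
    apply ENNReal.ofReal_le_ofReal
    have hexp : Real.exp (-a^2/(2*σ^2)) ≤ Real.exp (1/2) * (4/5) * δ := by
      have haa : -a^2/(2*σ^2) ≤ -(y^2)/2 := by
        rw [div_le_div_iff₀ (by positivity) (by norm_num)]
        nlinarith [mul_pos hσpos hy0]
      have h3 : Real.exp (-a^2/(2*σ^2)) ≤ Real.exp (1/2 - L) := by
        apply Real.exp_le_exp.mpr
        refine le_trans haa ?_
        linarith
      have h4 : Real.exp (1/2 - L) = Real.exp (1/2) * ((4/5) * δ) := by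
        rw [Real.exp_sub, hexpL]
        field_simp
      rw [h4] at h3; linarith
    have hfrac : σ / (a * Real.sqrt (2*Real.pi)) ≤ 1/(y * Real.sqrt (2*Real.pi)) := by
      rw [div_le_div_iff₀ (by positivity) (by positivity)]
      nlinarith [mul_pos hy0 hsq0]
    have hkey : Real.exp (1/2) * (4/5) ≤ y * Real.sqrt (2*Real.pi) := by
      nlinarith [exp_half_le, Real.exp_pos (1/2 : ℝ)]
    calc σ / (a * Real.sqrt (2*Real.pi)) * Real.exp (-a^2/(2*σ^2))
        ≤ 1/(y * Real.sqrt (2*Real.pi)) * (Real.exp (1/2) * (4/5) * δ) := by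
          apply mul_le_mul hfrac hexp (Real.exp_nonneg _) (by positivity)
      _ ≤ δ := by
          rw [div_mul_eq_mul_div, one_mul, div_le_iff₀ (by positivity)]
          nlinarith [hδ.le, mul_pos hy0 hsq0]
  · -- δ ≥ 1/2
    push_neg at hδhalf
    by_cases ha0 : 0 ≤ a
    · refine le_trans (gauss_half _ a ha0) ?_
      rw [← half_ofReal]
      exact ENNReal.ofReal_le_ofReal hδhalf
    · push_neg at ha0
      have hc2small : c^2 ≤ ε/2 := haup ha0
      have hL14 : L ≤ 1/4 := by nlinarith
      have hδ2526 : (25/26 : ℝ) ≤ δ := by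
        have h1 : Real.exp L ≤ Real.exp (1/4) := Real.exp_le_exp.mpr (by linarith)
        have h2 : (5/4:ℝ)/δ ≤ 13/10 := by rw [← hexpL]; linarith [exp_quarter_le]
        rw [div_le_iff₀ hδ] at h2; linarith
      have hsplit : Set.Ioi a = Set.Ioc a 0 ∪ Set.Ioi (0:ℝ) :=
        (Set.Ioc_union_Ioi_eq_Ioi ha0.le).symm
      rw [hsplit]
      refine le_trans (measure_union_le _ _) ?_
      have hna : -a ≤ σ * (4/5) := by
        have h1 : -a ≤ σ * (ε/(2*c) - c) := by nlinarith [halb]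
        have h2 : ε/(2*c) ≤ 4/5 := by
          rw [div_le_div_iff₀ (by positivity) (by norm_num)]
          nlinarith
        nlinarith [mul_pos hσpos hc0]
      have hstrip2 : (-a) * (σ * Real.sqrt (2*Real.pi))⁻¹ ≤ 8/25 := by
        have hinv : (σ * Real.sqrt (2*Real.pi))⁻¹ ≤ (σ * (5/2))⁻¹ := by
          apply inv_anti₀ (by positivity)
          nlinarith
        calc (-a) * (σ * Real.sqrt (2*Real.pi))⁻¹
            ≤ (σ * (4/5)) * (σ * (5/2))⁻¹ :=
              mul_le_mul hna hinv (by positivity) (by positivity)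
          _ = 8/25 := by
              field_simp
              ring
      have h12 : gaussianReal 0 (σ^2).toNNReal (Set.Ioi (0:ℝ)) ≤ ENNReal.ofReal (1/2) := by
        refine le_trans (gauss_half _ 0 le_rfl) ?_
        rw [half_ofReal]
      calc gaussianReal 0 (σ^2).toNNReal (Set.Ioc a 0) + gaussianReal 0 (σ^2).toNNReal (Set.Ioi 0)
          ≤ ENNReal.ofReal (8/25) + ENNReal.ofReal (1/2) :=
            add_le_add (le_trans (gauss_strip σ a hσpos ha0.le)
              (ENNReal.ofReal_le_ofReal hstrip2)) h12
        _ ≤ ENNReal.ofReal δ := by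
            rw [← ENNReal.ofReal_add (by norm_num) (by norm_num)]
            apply ENNReal.ofReal_le_ofReal
            linarith

lemma tail_pos (θ ε δ σ m : ℝ) (hθ : 0 < θ) (hm : 0 < m) (hmθ : m ≤ θ)
    (hε : 0 < ε) (hε1 : ε ≤ 1) (hδ : 0 < δ) (hδ1 : δ < 1) (hσpos : 0 < σ)
    (hεσ : θ * Real.sqrt (2 * Real.log (1.25 / δ)) ≤ ε * σ) :
    gaussianReal 0 (σ^2).toNNReal (Set.Ioi ((2*ε*σ^2 - m^2)/(2*m))) ≤ ENNReal.ofReal δ := by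
  apply tail_bound θ ε δ σ hθ hε hε1 hδ hδ1 hσpos hεσ
  rw [le_div_iff₀ (by positivity : (0:ℝ) < 2*m)]
  have hdiv : ε*σ^2/θ*m ≤ ε*σ^2 := by
    rw [div_mul_eq_mul_div, div_le_iff₀ hθ]
    have h := mul_le_mul_of_nonneg_left hmθ (show (0:ℝ) ≤ ε*σ^2 by positivity)
    nlinarith [h]
  nlinarith [hdiv, hm.le, hmθ]

/-- Gaussian privacy loss bound: for `|μ| ≤ θ`, `0 < ε ≤ 1`, `0 < δ < 1`, and
`σ ≥ θ·√(2 ln(1.25/δ))/ε`, the privacy loss `(2Zμ + μ²)/(2σ²)` of the Gaussian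
mechanism exceeds `ε` with probability at most `δ` when `Z ∼ N(0, σ²)`. -/
theorem gaussian_privacy_loss_bound (θ ε δ σ mu : ℝ)
    (hθ : 0 ≤ θ) (hmu : |mu| ≤ θ)
    (hε : 0 < ε) (hε1 : ε ≤ 1) (hδ : 0 < δ) (hδ1 : δ < 1)
    (hσpos : 0 < σ)
    (hσ : θ * Real.sqrt (2 * Real.log (1.25 / δ)) / ε ≤ σ) :
    gaussianReal 0 (σ ^ 2).toNNReal
        {z | ε < (2 * z * mu + mu ^ 2) / (2 * σ ^ 2)} ≤
      ENNReal.ofReal δ := by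
  by_cases hmu0 : mu = 0
  · subst hmu0
    have hset : {z : ℝ | ε < (2 * z * 0 + 0 ^ 2) / (2 * σ ^ 2)} = ∅ := by
      ext z
      simp only [Set.mem_setOf_eq, Set.mem_empty_iff_false, iff_false, not_lt]
      have : (2 * z * 0 + 0 ^ 2) / (2 * σ ^ 2) = 0 := by ring
      rw [this]
      exact hε.le
    rw [hset]
    simp
  · have hθpos : 0 < θ := lt_of_lt_of_le (abs_pos.mpr hmu0) hmu
    have hεσ : θ * Real.sqrt (2 * Real.log (1.25 / δ)) ≤ ε * σ := by
      rw [div_le_iff₀ hε] at hσ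
      linarith
    rcases lt_or_gt_of_ne hmu0 with hneg | hpos
    · -- mu < 0
      have hset : {z : ℝ | ε < (2 * z * mu + mu ^ 2) / (2 * σ ^ 2)}
          = Set.Iio ((2*ε*σ^2 - mu^2)/(2*mu)) := by
        ext z
        simp only [Set.mem_setOf_eq, Set.mem_Iio]
        rw [lt_div_iff₀ (by positivity : (0:ℝ) < 2*σ^2),
          lt_div_iff_of_neg (by linarith : 2*mu < 0)]
        constructor <;> intro h <;> nlinarith
      rw [hset, gauss_symm]
      have hrw : -((2*ε*σ^2 - mu^2)/(2*mu)) = (2*ε*σ^2 - (-mu)^2)/(2*(-mu)) := by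
        rw [← neg_div, div_eq_div_iff (by linarith : (2:ℝ)*mu ≠ 0) (by linarith : (2:ℝ)*(-mu) ≠ 0)]
        ring
      rw [hrw]
      exact tail_pos θ ε δ σ (-mu) hθpos (by linarith) (by rw [abs_of_neg hneg] at hmu; linarith)
        hε hε1 hδ hδ1 hσpos hεσ
    · -- mu > 0
      have hset : {z : ℝ | ε < (2 * z * mu + mu ^ 2) / (2 * σ ^ 2)}
          = Set.Ioi ((2*ε*σ^2 - mu^2)/(2*mu)) := by
        ext z
        simp only [Set.mem_setOf_eq, Set.mem_Ioi]
        rw [lt_div_iff₀ (by positivity : (0:ℝ) < 2*σ^2),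
          div_lt_iff₀ (by positivity : (0:ℝ) < 2*mu)]
        constructor <;> intro h <;> nlinarith
      rw [hset]
      exact tail_pos θ ε δ σ mu hθpos hpos (by rw [abs_of_pos hpos] at hmu; exact hmu)
        hε hε1 hδ hδ1 hσpos hεσ
end
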